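/- arXiv:1512.02527 — 9 statements merged into one kernel-verified Lean document; each statement's English description precedes it below -/
import Mathlib

section
/- Let B be a commutative ring in which 2 is invertible, and for a 2×2 matrix b over B let jor(b) denote the determinant of the B-linear map on 2×2 matrices z ↦ (zb+bz)/2 (Jordan multiplication by b). Then jor(b) = (1/4)·(tr b)^2·det(b). -/
/-!
In the basis of matrix units `E_kl`, `z ↦ b * z + z * b` sends `E_kl` to
`∑ᵢ b i k • E_il + ∑ⱼ b l j • E_kj`; for `2 × 2` matrices the resulting `4 × 4` determinant is
`4 (tr b)² det b` (over a field: the eigenvalues are `λᵢ + λⱼ`, whose product is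
`2λ₁ · 2λ₂ · (λ₁ + λ₂)²`). The scalar `⅟2` contributes `⅟2 ^ 4`.
-/

/-- `jor half b` : the determinant of the linear map `z ↦ half • (z*b + b*z)`
(Jordan multiplication by `b`, when `half` is the inverse of `2`). -/
noncomputable def jor {n : ℕ} {B : Type} [CommRing B] (half : B)
    (b : Matrix (Fin n) (Fin n) B) : B :=
  LinearMap.det (half • (LinearMap.mulLeft B b + LinearMap.mulRight B b))

open Matrix

theorem Matrix.stdBasis_repr_apply {R : Type*} [Semiring R] {m n : Type*} [Fintype m] [Finite n]
    (A : Matrix m n R) (p : m × n) :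
    (stdBasis R m n).repr A p = A p.1 p.2 := by
  simp [stdBasis]

section JordanMultiplication

variable {R : Type*} [CommRing R]

theorem toMatrix_mulLeft_add_mulRight {n : Type*} [Fintype n] [DecidableEq n]
    (b : Matrix n n R) (p q : n × n) :
    LinearMap.toMatrix (stdBasis R n n) (stdBasis R n n)
      (LinearMap.mulLeft R b + LinearMap.mulRight R b) p q =
      (if q.2 = p.2 then b p.1 q.1 else 0) + (if p.1 = q.1 then b q.2 p.2 else 0) := by
  obtain ⟨i, j⟩ := p
  obtain ⟨k, l⟩ := q
  simp [LinearMap.toMatrix_apply, stdBasis_repr_apply, stdBasis_eq_single, mul_apply, single_apply,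
    ite_and, eq_comm]

theorem reindex_toMatrix_mulLeft_add_mulRight_fin_two (b : Matrix (Fin 2) (Fin 2) R) :
    reindex finProdFinEquiv finProdFinEquiv
      (LinearMap.toMatrix (stdBasis R (Fin 2) (Fin 2)) (stdBasis R (Fin 2) (Fin 2))
        (LinearMap.mulLeft R b + LinearMap.mulRight R b)) =
      !![2 * b 0 0, b 1 0, b 0 1, 0;
         b 0 1, b 0 0 + b 1 1, 0, b 0 1;
         b 1 0, 0, b 0 0 + b 1 1, b 1 0;
         0, b 1 0, b 0 1, 2 * b 1 1] := by
  ext i j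
  rw [reindex_apply, submatrix_apply, finProdFinEquiv_symm_apply, finProdFinEquiv_symm_apply,
    toMatrix_mulLeft_add_mulRight]
  fin_cases i <;> fin_cases j <;> simp [Fin.divNat, Fin.modNat] <;> ring

theorem det_mulLeft_add_mulRight_fin_two (b : Matrix (Fin 2) (Fin 2) R) :
    LinearMap.det (LinearMap.mulLeft R b + LinearMap.mulRight R b) = 4 * b.trace ^ 2 * b.det := by
  rw [← LinearMap.det_toMatrix (stdBasis R (Fin 2) (Fin 2)), ← det_reindex_self finProdFinEquiv,
    reindex_toMatrix_mulLeft_add_mulRight_fin_two, det_succ_row_zero]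
  simp [Fin.sum_univ_succ, det_fin_three, Fin.succAbove, trace_fin_two, det_fin_two]
  ring

end JordanMultiplication

/-- For a `2 × 2` matrix `b` over a commutative ring in which `2` is invertible,
the determinant of Jordan multiplication by `b` equals `(1/4)·(tr b)^2·det b`. -/
theorem stmt0 (B : Type) [CommRing B] [Invertible (2 : B)]
    (b : Matrix (Fin 2) (Fin 2) B) :
    jor (⅟(2 : B)) b = ⅟(2 : B) * ⅟(2 : B) * (Matrix.trace b) ^ 2 * b.det := by
  have hcard : Fintype.card (Fin 2 × Fin 2) = 4 := rfl
  rw [jor, ← LinearMap.det_toMatrix (stdBasis B (Fin 2) (Fin 2)), map_smul, det_smul, hcard,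
    LinearMap.det_toMatrix, det_mulLeft_add_mulRight_fin_two]
  linear_combination ⅟(2 : B) ^ 2 * (2 * ⅟(2 : B) + 1) * b.trace ^ 2 * b.det * mul_invOf_self (2 : B)
end

section
/- Let K be a field of characteristic 0, let a,b,c,d be independent transcendentals over K, E = K(a,b,c,d), p an odd prime, and β_p = (ad−bc)^p / (a^p d^p − b^p c^p). Then the polynomial t^2 − β_p is irreducible over E; equivalently, β_p is not a square in E. -/
open MvPolynomial

noncomputable section

/-- The rational function field `E = K(a,b,c,d)`, realized as the fraction field of the
polynomial ring in the four indeterminates `a, b, c, d`. -/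
abbrev E (K : Type) [Field K] := FractionRing (MvPolynomial (Fin 4) K)

/-- The transcendental generator `a` of `E = K(a,b,c,d)`. -/
def va (K : Type) [Field K] : E K := algebraMap (MvPolynomial (Fin 4) K) (E K) (X 0)
/-- The transcendental generator `b` of `E = K(a,b,c,d)`. -/
def vb (K : Type) [Field K] : E K := algebraMap (MvPolynomial (Fin 4) K) (E K) (X 1)
/-- The transcendental generator `c` of `E = K(a,b,c,d)`. -/
def vc (K : Type) [Field K] : E K := algebraMap (MvPolynomial (Fin 4) K) (E K) (X 2)
/-- The transcendental generator `d` of `E = K(a,b,c,d)`. -/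
def vd (K : Type) [Field K] : E K := algebraMap (MvPolynomial (Fin 4) K) (E K) (X 3)

/-- For `E = K(a,b,c,d)` (`K` of characteristic zero) and `p` an odd prime, the polynomial
`t² − β_p` with `β_p = (ad−bc)^p/(a^p d^p − b^p c^p)` is irreducible over `E`;
equivalently, `β_p` is not a square in `E`. -/
theorem stmt5 (K : Type) [Field K] [CharZero K] (p : ℕ) (hp : p.Prime) (hodd : Odd p)
    (a b c d : E K) (ha : a = va K) (hb : b = vb K) (hc : c = vc K) (hd : d = vd K)
    (βp : E K) (hβ : βp = (a * d - b * c) ^ p / (a ^ p * d ^ p - b ^ p * c ^ p)) :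
    Irreducible (Polynomial.X ^ 2 - Polynomial.C βp) ∧ ¬ IsSquare βp := by
  classical
  have hinj : Function.Injective (algebraMap (MvPolynomial (Fin 4) K) (E K)) :=
    IsFractionRing.injective _ _
  set f : MvPolynomial (Fin 4) K := X 0 * X 3 - X 1 * X 2 with hf
  set S : MvPolynomial (Fin 4) K :=
    ∑ i ∈ Finset.range p, (X 0 * X 3) ^ i * (X 1 * X 2) ^ (p - 1 - i) with hS
  have hgeom : S * f = (X 0 * X 3) ^ p - (X 1 * X 2) ^ p := geom_sum₂_mul _ _ p
  -- the evaluation homomorphism a ↦ t, b, c, d ↦ 1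
  set v : Fin 4 → Polynomial K := fun i => if i = 0 then Polynomial.X else 1 with hv
  set φ : MvPolynomial (Fin 4) K →ₐ[K] Polynomial K := aeval v with hφ
  have hφf : φ f = Polynomial.X - Polynomial.C 1 := by
    simp [hφ, hf, hv]
  set Φ : Polynomial K := ∑ i ∈ Finset.range p, Polynomial.X ^ i with hΦ
  have hφS : φ S = Φ := by
    simp [hφ, hS, hΦ, hv]
  have hpK : (p : K) ≠ 0 := Nat.cast_ne_zero.mpr hp.ne_zero
  have hΦeval : Φ.eval 1 = (p : K) := by
    simp [hΦ, Polynomial.eval_finset_sum]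
  have hΦne : Φ ≠ 0 := fun h => hpK (by rw [← hΦeval, h, Polynomial.eval_zero])
  have hXdvd : ¬(Polynomial.X - Polynomial.C (1 : K)) ∣ Φ := by
    rw [Polynomial.dvd_iff_isRoot]
    intro h
    exact hpK (by rw [← hΦeval]; exact h)
  have hΦsf : Squarefree Φ := by
    have hsep : (Polynomial.X ^ p - Polynomial.C (1 : K)).Separable :=
      Polynomial.separable_X_pow_sub_C 1 hpK one_ne_zero
    have hd2 : Φ ∣ Polynomial.X ^ p - Polynomial.C (1 : K) := by
      refine ⟨Polynomial.X - Polynomial.C 1, ?_⟩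
      have h := geom_sum₂_mul (Polynomial.X : Polynomial K) (Polynomial.C (1 : K)) p
      simpa [hΦ] using h.symm
    exact Squarefree.squarefree_of_dvd hd2 hsep.squarefree
  have hΦnu : ¬IsUnit Φ := by
    intro h
    have h2 : Φ.coeff 1 = 1 := by
      rw [hΦ, Polynomial.finset_sum_coeff]
      rw [Finset.sum_congr rfl (fun i _ => Polynomial.coeff_X_pow i 1)]
      rw [Finset.sum_ite_eq (Finset.range p) 1 (fun _ => (1 : K))]
      simp [Finset.mem_range, Nat.lt_of_lt_of_le Nat.one_lt_two hp.two_le]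
    obtain ⟨r, -, hr⟩ := Polynomial.isUnit_iff.mp h
    rw [← hr, Polynomial.coeff_C] at h2
    simp at h2
  have hfne : f ≠ 0 := by
    intro h
    have := congrArg φ h
    rw [hφf, map_zero] at this
    exact Polynomial.X_sub_C_ne_zero (1 : K) this
  have hSne : S ≠ 0 := by
    intro h
    have := congrArg φ h
    rw [hφS, map_zero] at this
    exact hΦne this
  -- express βp
  have hFE : a * d - b * c = algebraMap (MvPolynomial (Fin 4) K) (E K) f := by
    rw [ha, hb, hc, hd, va, vb, vc, vd, hf]
    simp [map_sub, map_mul]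
  have hGE : a ^ p * d ^ p - b ^ p * c ^ p
      = algebraMap (MvPolynomial (Fin 4) K) (E K) (S * f) := by
    rw [hgeom, ha, hb, hc, hd, va, vb, vc, vd]
    simp [map_sub, map_mul, map_pow, mul_pow]
  set FE := algebraMap (MvPolynomial (Fin 4) K) (E K) f with hFEdef
  set SE := algebraMap (MvPolynomial (Fin 4) K) (E K) S with hSEdef
  have hFEne : FE ≠ 0 := fun h => hfne (hinj (by rw [← hFEdef, h, map_zero]))
  have hSEne : SE ≠ 0 := fun h => hSne (hinj (by rw [← hSEdef, h, map_zero]))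
  have hβ' : βp = FE ^ p / (SE * FE) := by
    rw [hβ, hFE, hGE, map_mul]
  have hps : p - 1 + 1 = p := Nat.succ_pred_eq_of_pos hp.pos
  -- main step : βp is not a square
  have hns : ¬IsSquare βp := by
    rintro ⟨h, hh⟩
    obtain ⟨n, dd, hdd, hnd⟩ := IsFractionRing.div_surjective (A := MvPolynomial (Fin 4) K) h
    have hddne : dd ≠ 0 := nonZeroDivisors.ne_zero hdd
    obtain ⟨r, s, c0, hrel, hcr, hcs⟩ :=
      UniqueFactorizationMonoid.exists_reduced_factors' n dd hddne
    have hc0ne : c0 ≠ 0 := fun h0 => hddne (by rw [← hcs, h0, zero_mul])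
    have hsne : s ≠ 0 := fun h0 => hddne (by rw [← hcs, h0, mul_zero])
    set rE := algebraMap (MvPolynomial (Fin 4) K) (E K) r with hrEdef
    set sE := algebraMap (MvPolynomial (Fin 4) K) (E K) s with hsEdef
    have hsEne : sE ≠ 0 := fun h0 => hsne (hinj (by rw [← hsEdef, h0, map_zero]))
    have hheq : h = rE / sE := by
      rw [← hnd, ← hcr, ← hcs, map_mul, map_mul, mul_div_mul_left]
      intro h0
      exact hc0ne (hinj (by rw [h0, map_zero]))
    -- cross-multiplied equation in E
    have h1 : FE ^ p * sE ^ 2 = rE ^ 2 * (SE * FE) := by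
      have e1 : FE ^ p / (SE * FE) = rE ^ 2 / sE ^ 2 := by
        rw [← hβ', hh, hheq, div_mul_div_comm, ← pow_two, ← pow_two]
      exact (div_eq_div_iff (mul_ne_zero hSEne hFEne) (pow_ne_zero 2 hsEne)).mp e1
    have hmainE : algebraMap (MvPolynomial (Fin 4) K) (E K) (f ^ (p - 1) * s ^ 2)
        = algebraMap (MvPolynomial (Fin 4) K) (E K) (S * r ^ 2) := by
      rw [map_mul, map_mul, map_pow, map_pow, map_pow, ← hFEdef, ← hSEdef, ← hrEdef, ← hsEdef]
      apply mul_right_cancel₀ hFEne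
      calc FE ^ (p - 1) * sE ^ 2 * FE = FE ^ (p - 1 + 1) * sE ^ 2 := by ring
        _ = FE ^ p * sE ^ 2 := by rw [hps]
        _ = rE ^ 2 * (SE * FE) := h1
        _ = SE * rE ^ 2 * FE := by ring
    have hR1 : f ^ (p - 1) * s ^ 2 = S * r ^ 2 := hinj hmainE
    -- s² divides S
    have hsdvd : s ^ 2 ∣ S := by
      refine (hrel.symm.pow (m := 2) (n := 2)).dvd_of_dvd_mul_right ?_
      exact ⟨f ^ (p - 1), by rw [← hR1]; ring⟩
    obtain ⟨m, hm⟩ := hsdvd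
    have hR2 : f ^ (p - 1) = m * r ^ 2 := by
      apply mul_right_cancel₀ (pow_ne_zero 2 hsne)
      rw [hR1, hm]; ring
    -- transfer to one variable
    have hφ1 : Φ = φ s ^ 2 * φ m := by
      rw [← hφS, hm, map_mul, map_pow]
    have hφ2 : (Polynomial.X - Polynomial.C (1 : K)) ^ (p - 1) = φ m * φ r ^ 2 := by
      rw [← hφf, ← map_pow, hR2, map_mul, map_pow]
    have hsunit : IsUnit (φ s) := hΦsf (φ s) ⟨φ m, by rw [hφ1]; ring⟩
    have hmdvd : φ m ∣ (Polynomial.X - Polynomial.C (1 : K)) ^ (p - 1) :=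
      ⟨φ r ^ 2, hφ2⟩
    obtain ⟨i, hi, hassoc⟩ := (dvd_prime_pow (Polynomial.prime_X_sub_C (1 : K)) (p - 1)).mp hmdvd
    rcases Nat.eq_zero_or_pos i with h0 | h1
    · rw [h0, pow_zero] at hassoc
      have hmu : IsUnit (φ m) := associated_one_iff_isUnit.mp hassoc
      exact hΦnu (by rw [hφ1]; exact (hsunit.pow 2).mul hmu)
    · have hXm : (Polynomial.X - Polynomial.C (1 : K)) ∣ φ m :=
        dvd_trans (dvd_pow_self _ h1.ne') hassoc.symm.dvd
      exact hXdvd (hXm.trans ⟨φ s ^ 2, by rw [hφ1]; ring⟩)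
  refine ⟨?_, hns⟩
  exact X_pow_sub_C_irreducible_of_prime Nat.prime_two
    (fun b0 hb0 => hns ⟨b0, by rw [← hb0]; ring⟩)
end
end

section
/- Let K be a field of characteristic 0 and p an odd prime. Then the polynomial Q = (ad+bc)^{2p} − 4^p a^p b^p c^p d^p is not a square in the polynomial ring K[a,b,c,d] (equivalently, not a square in K(a,b,c,d)). -/
noncomputable section

section KeyUnivariate
open Polynomial

lemma key_univ (K : Type) [Field K] [CharZero K] (p : ℕ) (hp : p.Prime) (hodd : Odd p) :
    ¬ IsSquare ((Polynomial.X + 1) ^ (2 * p) - 4 ^ p * Polynomial.X ^ p : Polynomial K) := by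
  rintro ⟨g, hg⟩
  set f : Polynomial K := (X + 1) ^ (2 * p) - 4 ^ p * X ^ p with hf
  have hp1 : 1 ≤ p := hp.one_lt.le
  have hp3 : 3 ≤ p := by
    rcases hodd with ⟨k, hk⟩
    by_contra h
    interval_cases p
    · exact absurd hp (by norm_num)
    · omega
  have h4 : (4:K) ≠ 0 := by norm_num
  have h4C : (4:Polynomial K) = C 4 := rfl
  have h4p : (4:Polynomial K) ^ p ≠ 0 := pow_ne_zero _ (by
    rw [h4C]; simpa using h4)
  -- f eval 0 = 1
  have heval0 : f.eval 0 = 1 := by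
    simp [hf, zero_pow (by positivity : 2*p ≠ 0), zero_pow (by omega : p ≠ 0)]
  have hfne : f ≠ 0 := fun h => by simp [h] at heval0
  have hgne : g ≠ 0 := fun h => hfne (by simp [hg, h])
  -- natDegree f = 2p
  have hXp1 : (X + 1 : Polynomial K).natDegree = 1 := by
    simpa using natDegree_X_add_C (1:K)
  have hdegf : f.natDegree = 2 * p := by
    rw [hf, natDegree_sub_eq_left_of_natDegree_lt]
    · rw [natDegree_pow, hXp1]; ring
    · rw [h4C, ← C_pow, natDegree_C_mul (pow_ne_zero _ h4), natDegree_pow, natDegree_X,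
        natDegree_pow, hXp1]
      omega
  have hdegg : g.natDegree = p := by
    have h2 : (g * g).natDegree = 2 * p := by rw [← hg, hdegf]
    rw [natDegree_mul hgne hgne] at h2
    omega
  -- derivative computation
  have hder : derivative f = (2*(p:Polynomial K)) * (X+1)^(2*p-1) - (p:Polynomial K) * 4^p * X^(p-1) := by
    rw [hf]
    simp only [derivative_sub, derivative_mul, derivative_pow, derivative_add, derivative_X,
      derivative_one, add_zero, mul_one, derivative_X_pow]
    have hd4 : derivative (4:Polynomial K) = 0 := by rw [h4C]; exact derivative_C
    rw [hd4]
    simp only [Polynomial.C_eq_natCast, mul_zero, zero_mul, zero_add]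
    push_cast
    ring
  -- key identity
  have hid : (2*(p:Polynomial K)) * f - (X+1) * derivative f
      = ((p:Polynomial K) * 4^p) * (X^(p-1) * (1-X)) := by
    rw [hder, hf]
    have e1 : (X+1:Polynomial K)^(2*p) = (X+1) * (X+1)^(2*p-1) := by
      rw [← pow_succ']; congr 1; omega
    have e2 : (X:Polynomial K)^p = X * X^(p-1) := by
      rw [← pow_succ']; congr 1; omega
    rw [e1, e2]; ring
  -- g divides both f and derivative f
  have hgf : g ∣ f := hg ▸ dvd_mul_right g g
  have hgf' : g ∣ derivative f := by
    rw [hg, derivative_mul]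
    exact dvd_add (Dvd.dvd.mul_left dvd_rfl _) (Dvd.dvd.mul_right dvd_rfl _)
  have hdvd : g ∣ ((p:Polynomial K) * 4^p) * (X^(p-1) * (1-X)) := by
    rw [← hid]
    exact dvd_sub (hgf.mul_left _) (hgf'.mul_left _)
  -- the constant in front is a unit
  have hu : IsUnit ((p:Polynomial K) * 4^p) := by
    have : ((p:Polynomial K) * 4^p) = C ((p:K) * 4^p) := by
      rw [C_mul, C_pow, ← h4C, Polynomial.C_eq_natCast]
    rw [this]
    exact isUnit_C.mpr (isUnit_iff_ne_zero.mpr (by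
      apply mul_ne_zero _ (pow_ne_zero _ h4)
      exact_mod_cast Nat.cast_ne_zero.mpr hp.ne_zero))
  have hdvd2 : g ∣ X^(p-1) * (1-X) := (hu.dvd_mul_left).mp hdvd
  -- X does not divide g
  have hXg : ¬ (X:Polynomial K) ∣ g := by
    intro h
    rw [X_dvd_iff] at h
    have : g.eval 0 * g.eval 0 = 1 := by rw [← eval_mul, ← hg, heval0]
    rw [← coeff_zero_eq_eval_zero, h] at this
    simp at this
  have hcop : IsCoprime ((X:Polynomial K)^(p-1)) g :=
    ((Polynomial.irreducible_X.coprime_iff_not_dvd).mpr hXg).pow_left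
  have hdvd3 : g ∣ (1 - X : Polynomial K) := hcop.symm.dvd_of_dvd_mul_left hdvd2
  have h1X : (1 - X : Polynomial K) ≠ 0 := fun h => by
    have := congrArg (Polynomial.eval 0) h; simp at this
  have : g.natDegree ≤ (1 - X : Polynomial K).natDegree := natDegree_le_of_dvd hdvd3 h1X
  have hd1 : (1 - X : Polynomial K).natDegree = 1 := by
    have : (1 - X : Polynomial K) = -(X - C 1) := by simp
    rw [this, natDegree_neg, natDegree_X_sub_C]
  omega

end KeyUnivariate

open MvPolynomial

set_option synthInstance.maxHeartbeats 1000000 in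
/-- For `K` a field of characteristic zero and `p` an odd prime, the polynomial
`Q = (ad+bc)^{2p} − 4^p a^p b^p c^p d^p` is not a square in `K[a,b,c,d]`
(equivalently, not a square in `K(a,b,c,d)`). Here `a, b, c, d` are the four
indeterminates `X 0, X 1, X 2, X 3`. -/
theorem stmt6 (K : Type) [Field K] [CharZero K] (p : ℕ) (hp : p.Prime) (hodd : Odd p)
    (Q : MvPolynomial (Fin 4) K)
    (hQ : Q = (X 0 * X 3 + X 1 * X 2) ^ (2 * p)
        - 4 ^ p * (X 0) ^ p * (X 1) ^ p * (X 2) ^ p * (X 3) ^ p) :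
    ¬ IsSquare Q ∧
    ¬ IsSquare (algebraMap (MvPolynomial (Fin 4) K)
        (FractionRing (MvPolynomial (Fin 4) K)) Q) := by
  have key := key_univ K p hp hodd
  have part1 : ¬ IsSquare Q := by
    rintro ⟨s, hs⟩
    apply key
    set φ : MvPolynomial (Fin 4) K →ₐ[K] Polynomial K :=
      MvPolynomial.aeval ![Polynomial.X, 1, 1, 1] with hφ
    refine ⟨φ s, ?_⟩
    have : φ Q = (Polynomial.X + 1) ^ (2 * p) - 4 ^ p * Polynomial.X ^ p := by
      rw [hQ]
      simp [hφ]
    rw [← this, hs, map_mul]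
  refine ⟨part1, ?_⟩
  rintro ⟨x, hx⟩
  apply part1
  have hint : IsIntegral (MvPolynomial (Fin 4) K) x := by
    refine ⟨Polynomial.X ^ 2 - Polynomial.C Q, Polynomial.monic_X_pow_sub_C Q two_ne_zero, ?_⟩
    simp [Polynomial.eval₂_sub, hx, sq]
  obtain ⟨y, hy⟩ := IsIntegrallyClosed.isIntegral_iff.mp hint
  refine ⟨y, ?_⟩
  apply IsFractionRing.injective (MvPolynomial (Fin 4) K) (FractionRing (MvPolynomial (Fin 4) K))
  rw [hx, map_mul, hy]
end
end

section
/- Let K be a field of characteristic 0, p an odd prime, s an indeterminate, and f(s) = (s+1)^{2p} − 4^p s^p ∈ K[s]. Then f(s) is not a square in K[s]. -/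
open Polynomial

/-- For `K` a field of characteristic zero and `p` an odd prime, the polynomial
`f(s) = (s+1)^{2p} − 4^p s^p` is not a square in `K[s]`. -/
theorem stmt7 (K : Type) [Field K] [CharZero K] (p : ℕ) (hp : p.Prime) (hodd : Odd p)
    (f : K[X]) (hf : f = (X + 1) ^ (2 * p) - 4 ^ p * X ^ p) :
    ¬ IsSquare f := by
  rintro ⟨g, hg⟩
  have hp1 : 2 ≤ p := hp.two_le
  have hpne : (p : K) ≠ 0 := Nat.cast_ne_zero.mpr hp.ne_zero
  set c : K := (4:K)^p * p with hc_def
  have hc : c ≠ 0 := mul_ne_zero (pow_ne_zero _ (by norm_num)) hpne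
  have h4C : (4:K[X]) ^ p = C ((4:K)^p) := by
    have : (4:K[X]) = C (4:K) := (map_ofNat C 4).symm
    rw [this, ← map_pow]
  -- eval at 0
  have hev : f.eval 0 = 1 := by
    subst hf
    simp [zero_pow hp.ne_zero]
  have hg0 : g ≠ 0 := by
    rintro rfl
    rw [hg] at hev; simp at hev
  -- derivative
  have hder : f.derivative = C (2*(p:K)) * (X+1)^(2*p-1) - C c * X^(p-1) := by
    subst hf
    rw [h4C]
    simp [derivative_pow, hc_def, C_mul]
    ring
  have hkey : (X+1) * f.derivative - C (2*(p:K)) * f = C c * (X^(p-1) * (X-1)) := by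
    rw [hder, hf, h4C]
    have e1 : ((X:K[X])+1) * (X+1)^(2*p-1) = (X+1)^(2*p) := by
      rw [← pow_succ']; congr 1; omega
    have e2 : (X:K[X]) * X^(p-1) = X^p := by
      rw [← pow_succ']; congr 1; omega
    rw [← e1, ← e2]
    simp only [hc_def, C_mul, map_pow, map_ofNat, map_natCast]
    ring
  have hdvd1 : g ∣ f := hg ▸ dvd_mul_right g g
  have hdvd2 : g ∣ f.derivative := by
    have h := congrArg derivative hg
    rw [derivative_mul] at h
    rw [h]
    exact dvd_add (dvd_mul_left _ _) (dvd_mul_right _ _)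
  have hdvd3 : g ∣ C c * (X^(p-1) * (X-1)) :=
    hkey ▸ dvd_sub (hdvd2.mul_left _) (hdvd1.mul_left _)
  have hdvd4 : g ∣ X^(p-1) * (X-1) := by
    have h1 : C (c⁻¹) * (C c * (X^(p-1)*(X-1))) = X^(p-1)*(X-1) := by
      rw [← mul_assoc, ← C_mul, inv_mul_cancel₀ hc, C_1, one_mul]
    exact h1 ▸ hdvd3.mul_left _
  -- degrees
  have hdegf : f.natDegree = 2 * p := by
    subst hf
    rw [h4C]
    have hX1 : (X+1 : K[X]) = X + C 1 := by simp
    have h1 : ((X+1 : K[X])^(2*p)).natDegree = 2*p := by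
      rw [natDegree_pow, hX1, natDegree_X_add_C, mul_one]
    have h2 : (C ((4:K)^p) * X^p).natDegree = p := by
      rw [natDegree_C_mul (pow_ne_zero _ (by norm_num)), natDegree_X_pow]
    rw [natDegree_sub_eq_left_of_natDegree_lt (by rw [h1, h2]; omega), h1]
  have hdegg : g.natDegree = p := by
    have := hdegf
    rw [hg, natDegree_mul hg0 hg0] at this
    omega
  have hXsub : (X - 1 : K[X]) = X - C 1 := by simp
  have hhne : (X^(p-1) * (X-1) : K[X]) ≠ 0 := by
    apply mul_ne_zero (pow_ne_zero _ X_ne_zero)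
    rw [hXsub]; exact X_sub_C_ne_zero 1
  have hdegh : ((X:K[X])^(p-1) * (X-1)).natDegree = p := by
    rw [natDegree_mul (pow_ne_zero _ X_ne_zero) (by rw [hXsub]; exact X_sub_C_ne_zero 1),
      natDegree_X_pow, hXsub, natDegree_X_sub_C]
    omega
  obtain ⟨u, hu⟩ := hdvd4
  have hune : u ≠ 0 := by
    rintro rfl
    rw [mul_zero] at hu
    exact hhne hu
  have hdegu : u.natDegree = 0 := by
    have := hdegh
    rw [hu, natDegree_mul hg0 hune, hdegg] at this
    omega
  have hueval : u.eval 0 ≠ 0 := by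
    obtain ⟨a, rfl⟩ := natDegree_eq_zero.mp hdegu
    simpa using fun h => hune (by rw [h, C_0])
  have hevh : ((X:K[X])^(p-1) * (X-1)).eval 0 = 0 := by
    simp [zero_pow (by omega : p - 1 ≠ 0)]
  rw [hu, eval_mul] at hevh
  have hge : g.eval 0 = 0 := by
    rcases mul_eq_zero.mp hevh with h | h
    · exact h
    · exact absurd h hueval
  rw [hg, eval_mul, hge, mul_zero] at hev
  exact one_ne_zero hev.symm
end

section
/- Let P be the polynomial ring ℚ[a,b,c,d], s an indeterminate, p an odd prime, M = 2(1+s^p)(1+s)^p − 2^{p+2} s^p and N = 2(1−s^p) and Pp = (1+s)^{2p} − 4^p s^p in ℚ[s]. Then M^2 − Pp·N^2 ≡ 4(4^p − 2^{p+2} + 4)·s^p modulo s^{p+1}; in particular, the s-adic valuation of M^2 − Pp·N^2 equals p. -/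
open Polynomial

/-- For an odd prime `p`, with `M = 2(1+s^p)(1+s)^p − 2^{p+2} s^p`, `N = 2(1−s^p)` and
`Pp = (1+s)^{2p} − 4^p s^p` in `ℚ[s]`, one has
`M² − Pp·N² ≡ 4(4^p − 2^{p+2} + 4)·s^p (mod s^{p+1})`; in particular the `s`-adic
valuation of `M² − Pp·N²` equals `p`. -/
theorem stmt9 (p : ℕ) (hp : p.Prime) (hodd : Odd p)
    (M N Pp : ℚ[X])
    (hM : M = 2 * (1 + X ^ p) * (1 + X) ^ p - 2 ^ (p + 2) * X ^ p)
    (hN : N = 2 * (1 - X ^ p))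
    (hPp : Pp = (1 + X) ^ (2 * p) - 4 ^ p * X ^ p) :
    (∃ g : ℚ[X],
        M ^ 2 - Pp * N ^ 2 = 4 * (4 ^ p - 2 ^ (p + 2) + 4) * X ^ p + X ^ (p + 1) * g) ∧
    (M ^ 2 - Pp * N ^ 2).rootMultiplicity 0 = p := by
  have hp0 : p ≠ 0 := hp.ne_zero
  set G : ℚ[X] :=
    16 * (1 + X) ^ (2 * p) - 2 ^ (p + 4) * (1 + X ^ p) * (1 + X) ^ p
      + 4 ^ (p + 1) * (1 - X ^ p) ^ 2 + 4 ^ (p + 2) * X ^ p with hG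
  have hfact : M ^ 2 - Pp * N ^ 2 = X ^ p * G := by
    subst hM hN hPp; rw [hG]
    have e : (2 : ℚ[X]) ^ (2 * p) = 4 ^ p := by rw [pow_mul]; norm_num
    linear_combination (16 * X ^ (2 * p)) * e
  -- evaluation of G at 0
  have hGeval : G.eval 0 = 4 * (4 ^ p - 2 ^ (p + 2) + 4) := by
    simp [hG, zero_pow hp0]
    ring
  have h2p : (2 : ℚ) ^ p ≠ 2 := by
    have h1 : (2 : ℚ) ^ 1 < 2 ^ p := by
      exact pow_lt_pow_right₀ one_lt_two hp.one_lt
    simp at h1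
    exact ne_of_gt h1
  have hc : (4 : ℚ) * (4 ^ p - 2 ^ (p + 2) + 4) ≠ 0 := by
    have h4 : (4 : ℚ) ^ p = ((2 : ℚ) ^ p) ^ 2 := by
      rw [show (4 : ℚ) = 2 ^ 2 by norm_num, ← pow_mul, ← pow_mul, mul_comm]
    have : (4 : ℚ) * (4 ^ p - 2 ^ (p + 2) + 4) = 4 * ((2 ^ p - 2) ^ 2) := by
      rw [h4]; ring
    rw [this]
    exact mul_ne_zero (by norm_num) (pow_ne_zero _ (sub_ne_zero.mpr h2p))
  have hGne : G.eval 0 ≠ 0 := by rw [hGeval]; exact hc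
  constructor
  · -- congruence part
    have hdvd : X ∣ G - 4 * (4 ^ p - 2 ^ (p + 2) + 4) := by
      have hX0 : (X : ℚ[X]) = X - C 0 := by simp
      rw [hX0, dvd_iff_isRoot]
      simp [IsRoot, hGeval]
    obtain ⟨g, hg⟩ := hdvd
    refine ⟨g, ?_⟩
    have hGg : G = 4 * (4 ^ p - 2 ^ (p + 2) + 4) + X * g := by
      linear_combination hg
    rw [hfact, hGg]
    ring
  · -- root multiplicity
    have hGne' : G ≠ 0 := fun h => hGne (by simp [h])
    have hXp : (X : ℚ[X]) ^ p ≠ 0 := pow_ne_zero _ X_ne_zero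
    rw [hfact, rootMultiplicity_mul (mul_ne_zero hXp hGne')]
    have h1 : rootMultiplicity 0 ((X : ℚ[X]) ^ p) = p := by
      have := rootMultiplicity_X_sub_C_pow (0 : ℚ) p
      simpa using this
    have h2 : rootMultiplicity 0 G = 0 := rootMultiplicity_eq_zero hGne
    omega
end

section
/- Let K be a field of characteristic 0, E = K(a,b,c,d), p an odd prime, and u, v, w ∈ E as in the Chern connection computation for the split symmetric 2×2 matrix q (u = ((a^p d^p + b^p c^p)(ad+bc)^p − 2^{p+1}a^p b^p c^p d^p)/(a^p d^p − b^p c^p)^2, v = b^p d^p·(2^p(a^p d^p+b^p c^p) − 2(ad+bc)^p)/(a^p d^p − b^p c^p)^2, w = a^p c^p·(2^p(a^p d^p+b^p c^p) − 2(ad+bc)^p)/(a^p d^p − b^p c^p)^2). Then the polynomial t^4 − 4u t^2 + 4vw is irreducible over E. -/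
/-! With `A = 4u` and `B = 4vw`, the quartic `X⁴ - A X² + B` is irreducible as soon as neither `B`
nor `A² - 4B` is a square: a linear factor gives a root `r` with `(2r² - A)² = A² - 4B`, and
comparing coefficients in a product of two monic quadratics forces `B = t²` or
`A² - 4B = (t - t')²`.

Clearing denominators, `4vw` is `(abcd)^p` times a nonzero square and `A² - 4B` is
`(ad + bc)^(2p) - 4^p (abcd)^p` times a nonzero square; as `p` is odd, it suffices that `abcd`
and the latter polynomial are not squares in `E`. Since `K[a,b,c,d]` is integrally closed, they
would then be squares in `K[a,b,c,d]`, and the specialization `a ↦ X, b, c, d ↦ 1` sends them to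
`X` and `(X + 1)^(2p) - 4^p X^p`. The latter is not a square in `K[X]`: otherwise
`((X + 1)^p - G)((X + 1)^p + G) = 4^p X^p` makes both factors monomials, whose sum `2(X + 1)^p`
has at least three nonzero coefficients. -/

open MvPolynomial

noncomputable section

namespace Polynomial

variable {F : Type*} [Field F]

theorem Monic.eq_X_sq_add_C_mul_X_add_C {f : F[X]} (hf : f.Monic) (hdeg : f.natDegree = 2) :
    f = X ^ 2 + C (f.coeff 1) * X + C (f.coeff 0) := by
  conv_lhs => rw [hf.as_sum, hdeg]
  simp only [Finset.sum_range_succ, Finset.sum_range_zero, pow_zero, pow_one, mul_one, zero_add]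
  ring

theorem isSquare_or_isSquare_of_quadratic_factorization {A B s t s' t' : F}
    (h : (X ^ 2 + C s * X + C t) * (X ^ 2 + C s' * X + C t') = X ^ 4 - C A * X ^ 2 + C B) :
    IsSquare B ∨ IsSquare (A ^ 2 - 4 * B) := by
  have hexp : (X ^ 2 + C s * X + C t) * (X ^ 2 + C s' * X + C t')
      = X ^ 4 + C (s + s') * X ^ 3 + C (t + t' + s * s') * X ^ 2 + C (s * t' + s' * t) * X
        + C (t * t') := by
    simp only [map_add, map_mul]; ring
  rw [hexp] at h
  have h3 := congrArg (coeff · 3) h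
  have h2 := congrArg (coeff · 2) h
  have h1 := congrArg (coeff · 1) h
  have h0 := congrArg (coeff · 0) h
  simp only [coeff_add, coeff_sub, coeff_C_mul, coeff_X_pow, coeff_X, coeff_C] at h3 h2 h1 h0
  norm_num at h3 h2 h1 h0
  obtain rfl : s' = -s := by linear_combination h3
  rcases mul_eq_zero.mp (by linear_combination h1 : s * (t' - t) = 0) with rfl | ht
  · exact .inr ⟨t - t', by linear_combination (A - t - t') * h2 + 4 * h0⟩
  · exact .inl ⟨t, by linear_combination -h0 + t * ht⟩

theorem irreducible_X_pow_four_sub_C_mul_X_sq_add_C {A B : F} (hB : ¬ IsSquare B)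
    (hD : ¬ IsSquare (A ^ 2 - 4 * B)) : Irreducible (X ^ 4 - C A * X ^ 2 + C B : F[X]) := by
  have hmonic : (X ^ 4 - C A * X ^ 2 + C B : F[X]).Monic := by monicity!
  have hdeg : (X ^ 4 - C A * X ^ 2 + C B : F[X]).natDegree = 4 := by compute_degree!
  refine hmonic.irreducible_iff_natDegree'.mpr
    ⟨fun h => by simp [h] at hdeg, fun f g hf hg hfg hg_deg => ?_⟩
  rw [hdeg, Finset.mem_Ioc] at hg_deg
  have hf_deg : f.natDegree + g.natDegree = 4 := by rw [← hf.natDegree_mul hg, hfg, hdeg]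
  obtain hg1 | hg2 : g.natDegree = 1 ∨ g.natDegree = 2 := by omega
  · have hroot : (f * g).IsRoot (-g.coeff 0) := by
      rw [IsRoot, eval_mul, hg.eq_X_add_C hg1]
      simp
    rw [hfg, IsRoot] at hroot
    refine hD ⟨2 * g.coeff 0 ^ 2 - A, ?_⟩
    simp only [eval_add, eval_sub, eval_mul, eval_pow, eval_X, eval_C] at hroot
    linear_combination -4 * hroot
  · rw [hf.eq_X_sq_add_C_mul_X_add_C (by omega), hg.eq_X_sq_add_C_mul_X_add_C hg2] at hfg
    exact (isSquare_or_isSquare_of_quadratic_factorization hfg).elim hB hD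

theorem exists_eq_C_mul_X_pow_of_dvd_X_pow {f : F[X]} {n : ℕ} (h : f ∣ X ^ n) :
    ∃ a i, f = C a * X ^ i := by
  obtain ⟨i, -, hi⟩ := (dvd_prime_pow prime_X n).mp h
  obtain ⟨u, hu⟩ := hi.symm
  obtain ⟨a, -, ha⟩ := isUnit_iff.mp u.isUnit
  exact ⟨a, i, by rw [← hu, ← ha, mul_comm]⟩

theorem not_isSquare_X_add_one_pow_sub_C_mul_X_pow [CharZero F] {n : ℕ} (hn : 2 ≤ n) {c : F}
    (hc : c ≠ 0) : ¬ IsSquare ((X + 1) ^ (2 * n) - C c * X ^ n) := by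
  rintro ⟨G, hG⟩
  have hfactor : ((X + 1) ^ n - G) * ((X + 1) ^ n + G) = C c * X ^ n := by
    linear_combination hG
  have hmonomial : ∀ H, H ∣ C c * X ^ n → ∃ a i, H = C a * X ^ i := fun H hH =>
    exists_eq_C_mul_X_pow_of_dvd_X_pow ((isUnit_C.mpr hc.isUnit).dvd_mul_left.mp hH)
  obtain ⟨a₁, i, h₁⟩ := hmonomial _ (Dvd.intro _ hfactor)
  obtain ⟨a₂, j, h₂⟩ := hmonomial _ (Dvd.intro_left _ hfactor)
  have hsum : 2 * (X + 1) ^ n = C a₁ * X ^ i + C a₂ * X ^ j := by rw [← h₁, ← h₂]; ring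
  obtain ⟨k, hk, hki, hkj⟩ : ∃ k ≤ 2, k ≠ i ∧ k ≠ j := by
    by_contra! h
    have := h 0; have := h 1; have := h 2
    omega
  have hcoeff := congrArg (coeff · k) hsum
  simp only [coeff_ofNat_mul, coeff_X_add_one_pow, coeff_add, coeff_C_mul, coeff_X_pow, hki, hkj,
    if_false, mul_zero, add_zero, mul_eq_zero, OfNat.ofNat_ne_zero, Nat.cast_eq_zero, false_or]
    at hcoeff
  exact (Nat.choose_pos (by omega)).ne' hcoeff

end Polynomial

theorem IsSquare.of_mul_sq {F : Type*} [Field F] {x y : F} (hy : y ≠ 0)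
    (h : IsSquare (x * y ^ 2)) : IsSquare x := by
  simpa [hy] using h.div (IsSquare.sq y)

theorem IsSquare.of_pow_of_odd {F : Type*} [Field F] {x : F} {n : ℕ} (hn : Odd n)
    (h : IsSquare (x ^ n)) : IsSquare x := by
  obtain rfl | hx := eq_or_ne x 0
  · exact IsSquare.zero
  obtain ⟨k, rfl⟩ := hn
  exact IsSquare.of_mul_sq (pow_ne_zero k hx) (by rwa [← pow_mul, ← pow_succ', mul_comm])

theorem IsIntegrallyClosed.isSquare_of_isSquare_algebraMap {R F : Type*} [CommRing R] [Field F]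
    [Algebra R F] [IsFractionRing R F] [IsIntegrallyClosed R] {r : R}
    (h : IsSquare (algebraMap R F r)) : IsSquare r := by
  obtain ⟨x, hx⟩ := h
  have hint : IsIntegral R x :=
    ⟨Polynomial.X ^ 2 - Polynomial.C r, Polynomial.monic_X_pow_sub_C r two_ne_zero, by
      simp [hx, sq]⟩
  obtain ⟨y, rfl⟩ := IsIntegrallyClosed.isIntegral_iff.mp hint
  exact ⟨y, IsFractionRing.injective R F (by rw [hx, map_mul])⟩

section FractionField

variable {K : Type} [Field K] {σ : Type*}

theorem not_isSquare_algebraMap_of_not_isSquare_aeval (φ : σ → Polynomial K)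
    {r : MvPolynomial σ K} (h : ¬ IsSquare (aeval φ r)) :
    ¬ IsSquare (algebraMap (MvPolynomial σ K) (FractionRing (MvPolynomial σ K)) r) :=
  fun hr => h ((IsIntegrallyClosed.isSquare_of_isSquare_algebraMap hr).map (aeval φ))

theorem algebraMap_ne_zero_of_eval_ne_zero (x : σ → K) {r : MvPolynomial σ K}
    (h : eval x r ≠ 0) :
    algebraMap (MvPolynomial σ K) (FractionRing (MvPolynomial σ K)) r ≠ 0 :=
  (map_ne_zero_iff _ (IsFractionRing.injective _ _)).mpr fun hr => h (by rw [hr, map_zero])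

end FractionField

section Generators

variable {K : Type} [Field K]

theorem not_isSquare_va_mul_vb_mul_vc_mul_vd : ¬ IsSquare (va K * vb K * vc K * vd K) := by
  have h : va K * vb K * vc K * vd K
      = algebraMap (MvPolynomial (Fin 4) K) (E K) (X 0 * X 1 * X 2 * X 3) := by
    simp [va, vb, vc, vd]
  rw [h]
  apply not_isSquare_algebraMap_of_not_isSquare_aeval ![Polynomial.X, 1, 1, 1]
  simpa using Polynomial.prime_X.not_isSquare

theorem not_isSquare_va_mul_vd_add_vb_mul_vc_pow_sub [CharZero K] {p : ℕ} (hp : 2 ≤ p) :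
    ¬ IsSquare ((va K * vd K + vb K * vc K) ^ (2 * p)
      - 4 ^ p * (va K * vb K * vc K * vd K) ^ p) := by
  have h : (va K * vd K + vb K * vc K) ^ (2 * p) - 4 ^ p * (va K * vb K * vc K * vd K) ^ p
      = algebraMap (MvPolynomial (Fin 4) K) (E K)
        ((X 0 * X 3 + X 1 * X 2) ^ (2 * p) - 4 ^ p * (X 0 * X 1 * X 2 * X 3) ^ p) := by
    simp [va, vb, vc, vd, map_ofNat]
  rw [h]
  apply not_isSquare_algebraMap_of_not_isSquare_aeval ![Polynomial.X, 1, 1, 1]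
  convert Polynomial.not_isSquare_X_add_one_pow_sub_C_mul_X_pow hp (c := (4 : K) ^ p)
    (pow_ne_zero p (by norm_num)) using 2
  simp [map_ofNat]

theorem va_pow_mul_vd_pow_sub_ne_zero {p : ℕ} (hp : p ≠ 0) :
    va K ^ p * vd K ^ p - vb K ^ p * vc K ^ p ≠ 0 := by
  have h : va K ^ p * vd K ^ p - vb K ^ p * vc K ^ p
      = algebraMap (MvPolynomial (Fin 4) K) (E K) (X 0 ^ p * X 3 ^ p - X 1 ^ p * X 2 ^ p) := by
    simp [va, vb, vc, vd]
  rw [h]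
  apply algebraMap_ne_zero_of_eval_ne_zero ![1, 0, 0, 1]
  simp [zero_pow hp]

theorem two_pow_mul_sub_two_mul_pow_ne_zero [CharZero K] {p : ℕ} (hp : 2 ≤ p) :
    2 ^ p * (va K ^ p * vd K ^ p + vb K ^ p * vc K ^ p) - 2 * (va K * vd K + vb K * vc K) ^ p
      ≠ 0 := by
  have h : 2 ^ p * (va K ^ p * vd K ^ p + vb K ^ p * vc K ^ p)
        - 2 * (va K * vd K + vb K * vc K) ^ p
      = algebraMap (MvPolynomial (Fin 4) K) (E K)
        (2 ^ p * (X 0 ^ p * X 3 ^ p + X 1 ^ p * X 2 ^ p) - 2 * (X 0 * X 3 + X 1 * X 2) ^ p) := by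
    simp [va, vb, vc, vd, map_ofNat]
  rw [h]
  apply algebraMap_ne_zero_of_eval_ne_zero ![1, 0, 0, 1]
  have h2p : (2 : K) ^ p ≠ 2 := by
    have : 2 ^ 2 ≤ 2 ^ p := Nat.pow_le_pow_right two_pos hp
    exact_mod_cast (by omega : 2 ^ p ≠ 2)
  simpa [zero_pow (by omega : p ≠ 0), sub_eq_zero] using h2p

end Generators

/-- In `E = K(a,b,c,d)` (`K` of characteristic zero, `p` an odd prime), with `u, v, w`
as in the Chern connection computation for the split symmetric `2 × 2` matrix,
the polynomial `t⁴ − 4u t² + 4vw` is irreducible over `E`. -/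
theorem stmt11 (K : Type) [Field K] [CharZero K] (p : ℕ) (hp : p.Prime) (hodd : Odd p)
    (a b c d : E K) (ha : a = va K) (hb : b = vb K) (hc : c = vc K) (hd : d = vd K)
    (u v w : E K)
    (hu : u = ((a ^ p * d ^ p + b ^ p * c ^ p) * (a * d + b * c) ^ p
          - 2 ^ (p + 1) * a ^ p * b ^ p * c ^ p * d ^ p)
        / (a ^ p * d ^ p - b ^ p * c ^ p) ^ 2)
    (hv : v = b ^ p * d ^ p * (2 ^ p * (a ^ p * d ^ p + b ^ p * c ^ p)
          - 2 * (a * d + b * c) ^ p) / (a ^ p * d ^ p - b ^ p * c ^ p) ^ 2)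
    (hw : w = a ^ p * c ^ p * (2 ^ p * (a ^ p * d ^ p + b ^ p * c ^ p)
          - 2 * (a * d + b * c) ^ p) / (a ^ p * d ^ p - b ^ p * c ^ p) ^ 2) :
    Irreducible (Polynomial.X ^ 4 - Polynomial.C (4 * u) * Polynomial.X ^ 2
      + Polynomial.C (4 * v * w)) := by
  subst ha hb hc hd
  set Δ := va K ^ p * vd K ^ p - vb K ^ p * vc K ^ p
  set M := 2 ^ p * (va K ^ p * vd K ^ p + vb K ^ p * vc K ^ p)
    - 2 * (va K * vd K + vb K * vc K) ^ p
  have hΔ : Δ ≠ 0 := va_pow_mul_vd_pow_sub_ne_zero hp.ne_zero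
  have hM : M ≠ 0 := two_pow_mul_sub_two_mul_pow_ne_zero hp.two_le
  have hvw : 4 * v * w = (va K * vb K * vc K * vd K) ^ p * (2 * M / Δ ^ 2) ^ 2 := by
    rw [hv, hw]; ring
  have huvw : (4 * u) ^ 2 - 4 * (4 * v * w) = ((va K * vd K + vb K * vc K) ^ (2 * p)
      - 4 ^ p * (va K * vb K * vc K * vd K) ^ p) * (4 / Δ) ^ 2 := by
    rw [hu, hv, hw, (by rw [← mul_pow]; norm_num : (4 : E K) ^ p = 2 ^ p * 2 ^ p)]
    field_simp
    ring
  refine Polynomial.irreducible_X_pow_four_sub_C_mul_X_sq_add_C ?_ ?_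
  · rw [hvw]
    exact fun h => not_isSquare_va_mul_vb_mul_vc_mul_vd
      ((h.of_mul_sq (by simp [hM, hΔ])).of_pow_of_odd hodd)
  · rw [huvw]
    exact fun h => not_isSquare_va_mul_vd_add_vb_mul_vc_pow_sub hp.two_le
      (h.of_mul_sq (by simp [hΔ]))
end
end

section
/- Let K be a field of characteristic 0, p, p' odd primes, E = K(a,b,c,d), β_p = (ad−bc)^p/(a^p d^p − b^p c^p), and let φ_p : E → E(θ_p) with θ_p^2 = β_p be the ring homomorphism with φ_p(a) = θ_p a^p, φ_p(b) = θ_p b^p, φ_p(c) = θ_p c^p, φ_p(d) = θ_p d^p. Then φ_{p'}(β_p)·β_{p'}^p = (ad−bc)^{pp'}/(a^{pp'}d^{pp'} − b^{pp'}c^{pp'}); in particular φ_{p'}(β_p)·β_{p'}^p = φ_p(β_{p'})·β_p^{p'}. -/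
open MvPolynomial

set_option synthInstance.maxHeartbeats 1000000
set_option maxHeartbeats 1000000

noncomputable section

lemma poly_ne (K : Type) [Field K] (n : ℕ) (hn : n ≠ 0) :
    (X 0 : MvPolynomial (Fin 4) K) ^ n * X 3 ^ n - X 1 ^ n * X 2 ^ n ≠ 0 := by
  have hne : (Finsupp.single (1 : Fin 4) n + Finsupp.single 2 n)
      ≠ (Finsupp.single (0 : Fin 4) n + Finsupp.single 3 n) := by
    intro h
    have := DFunLike.congr_fun h 0
    simp [Finsupp.single_apply] at this
    exact hn this.symm
  intro h
  have hc := congrArg (MvPolynomial.coeff (Finsupp.single (0 : Fin 4) n + Finsupp.single 3 n)) h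
  simp [X_pow_eq_monomial, monomial_mul, coeff_sub, coeff_monomial, hne] at hc

lemma key (K : Type) [Field K] (p p' : ℕ) (hp : p ≠ 0) (hp' : p' ≠ 0)
    (a b c d : E K) (ha : a = va K) (hb : b = vb K) (hc : c = vc K) (hd : d = vd K)
    (βp βp' : E K)
    (hβp : βp = (a * d - b * c) ^ p / (a ^ p * d ^ p - b ^ p * c ^ p))
    (hβp' : βp' = (a * d - b * c) ^ p' / (a ^ p' * d ^ p' - b ^ p' * c ^ p'))
    (F : Type) [Field F] [Algebra (E K) F] (θ' : F)
    (hθ' : θ' ^ 2 = algebraMap (E K) F βp')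
    (φ' : E K →+* F)
    (hφ'a : φ' a = θ' * algebraMap (E K) F a ^ p')
    (hφ'b : φ' b = θ' * algebraMap (E K) F b ^ p')
    (hφ'c : φ' c = θ' * algebraMap (E K) F c ^ p')
    (hφ'd : φ' d = θ' * algebraMap (E K) F d ^ p') :
    φ' βp * algebraMap (E K) F βp' ^ p
        = algebraMap (E K) F ((a * d - b * c) ^ (p * p')
            / (a ^ (p * p') * d ^ (p * p') - b ^ (p * p') * c ^ (p * p'))) := by
  have hD : ∀ n : ℕ, n ≠ 0 → a ^ n * d ^ n - b ^ n * c ^ n ≠ 0 := by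
    intro n hn
    rw [ha, hb, hc, hd]
    unfold va vb vc vd
    rw [← map_pow, ← map_pow, ← map_pow, ← map_pow, ← map_mul, ← map_mul, ← map_sub]
    exact fun h => poly_ne K n hn
      ((map_eq_zero_iff _ (IsFractionRing.injective (MvPolynomial (Fin 4) K) (E K))).mp h)
  have hN : a * d - b * c ≠ 0 := by
    have := hD 1 one_ne_zero
    simpa using this
  have hβ'ne : βp' ≠ 0 := by
    rw [hβp']
    exact div_ne_zero (pow_ne_zero _ hN) (hD p' hp')
  set g := algebraMap (E K) F with hg
  have hginj : Function.Injective g := (algebraMap (E K) F).injective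
  have hgβ' : g βp' ≠ 0 := fun h => hβ'ne (hginj (h.trans (map_zero g).symm))
  have hgD : g (a ^ (p*p') * d ^ (p*p') - b ^ (p*p') * c ^ (p*p')) ≠ 0 := fun h =>
    hD (p*p') (mul_ne_zero hp hp') (hginj (h.trans (map_zero g).symm))
  have hgsub : ∀ n : ℕ, g (a ^ n * d ^ n - b ^ n * c ^ n)
      = g a ^ n * g d ^ n - g b ^ n * g c ^ n := by
    intro n
    rw [map_sub, map_mul, map_mul, map_pow, map_pow, map_pow, map_pow]
  have e1 : φ' (a * d - b * c) = g ((a * d - b * c) ^ p') := by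
    have h1 : φ' (a * d - b * c) = g βp' * (g a ^ p' * g d ^ p' - g b ^ p' * g c ^ p') := by
      rw [map_sub, map_mul, map_mul, hφ'a, hφ'b, hφ'c, hφ'd, ← hθ']; ring
    have hDp' : g (a ^ p' * d ^ p' - b ^ p' * c ^ p') ≠ 0 :=
      fun h => hD p' hp' (hginj (h.trans (map_zero g).symm))
    rw [h1, hβp', map_div₀, ← hgsub, div_mul_cancel₀ _ hDp']
  have e2 : φ' (a ^ p * d ^ p - b ^ p * c ^ p)
      = g βp' ^ p * g (a ^ (p*p') * d ^ (p*p') - b ^ (p*p') * c ^ (p*p')) := by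
    rw [map_sub, map_mul, map_mul, map_pow, map_pow, map_pow, map_pow,
      hφ'a, hφ'b, hφ'c, hφ'd, ← hθ', hgsub]
    ring
  rw [hβp, map_div₀, map_pow, e1, e2, map_div₀, ← map_pow, ← pow_mul, mul_comm p' p,
    div_mul_eq_mul_div, mul_comm (g ((a * d - b * c) ^ (p * p'))),
    mul_div_mul_left _ _ (pow_ne_zero p hgβ')]


/-- For odd primes `p, p'`, `β_p = (ad−bc)^p/(a^p d^p − b^p c^p) ∈ E = K(a,b,c,d)`, and
`φ_{p'} : E → E(θ_{p'})` the ring homomorphism with `θ_{p'}² = β_{p'}` and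
`φ_{p'}(x) = θ_{p'}·x^{p'}` on each of the generators `a, b, c, d`, one has
`φ_{p'}(β_p)·β_{p'}^p = (ad−bc)^{pp'}/(a^{pp'}d^{pp'} − b^{pp'}c^{pp'})`; in particular
(applying the same with `p` and `p'` interchanged) `φ_{p'}(β_p)·β_{p'}^p` and
`φ_p(β_{p'})·β_p^{p'}` are both equal to (the image of) this common element of `E`. -/
theorem stmt12 (K : Type) [Field K] [CharZero K] (p p' : ℕ)
    (hp : p.Prime) (hop : Odd p) (hp' : p'.Prime) (hop' : Odd p')
    (a b c d : E K) (ha : a = va K) (hb : b = vb K) (hc : c = vc K) (hd : d = vd K)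
    (βp βp' : E K)
    (hβp : βp = (a * d - b * c) ^ p / (a ^ p * d ^ p - b ^ p * c ^ p))
    (hβp' : βp' = (a * d - b * c) ^ p' / (a ^ p' * d ^ p' - b ^ p' * c ^ p'))
    -- the extension `E(θ_{p'})` and the homomorphism `φ_{p'}`
    (F : Type) [Field F] [Algebra (E K) F] (θ' : F)
    (hθ' : θ' ^ 2 = algebraMap (E K) F βp')
    (φ' : E K →+* F)
    (hφ'a : φ' a = θ' * algebraMap (E K) F a ^ p')
    (hφ'b : φ' b = θ' * algebraMap (E K) F b ^ p')
    (hφ'c : φ' c = θ' * algebraMap (E K) F c ^ p')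
    (hφ'd : φ' d = θ' * algebraMap (E K) F d ^ p')
    -- the extension `E(θ_p)` and the homomorphism `φ_p`
    (F₂ : Type) [Field F₂] [Algebra (E K) F₂] (θ : F₂)
    (hθ : θ ^ 2 = algebraMap (E K) F₂ βp)
    (φ : E K →+* F₂)
    (hφa : φ a = θ * algebraMap (E K) F₂ a ^ p)
    (hφb : φ b = θ * algebraMap (E K) F₂ b ^ p)
    (hφc : φ c = θ * algebraMap (E K) F₂ c ^ p)
    (hφd : φ d = θ * algebraMap (E K) F₂ d ^ p) :
    φ' βp * algebraMap (E K) F βp' ^ p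
        = algebraMap (E K) F ((a * d - b * c) ^ (p * p')
            / (a ^ (p * p') * d ^ (p * p') - b ^ (p * p') * c ^ (p * p'))) ∧
    φ βp' * algebraMap (E K) F₂ βp ^ p'
        = algebraMap (E K) F₂ ((a * d - b * c) ^ (p * p')
            / (a ^ (p * p') * d ^ (p * p') - b ^ (p * p') * c ^ (p * p'))) := by
  constructor
  · exact key K p p' hp.ne_zero hp'.ne_zero a b c d ha hb hc hd βp βp' hβp hβp'
      F θ' hθ' φ' hφ'a hφ'b hφ'c hφ'd
  · rw [mul_comm p p']
    exact key K p' p hp'.ne_zero hp.ne_zero a b c d ha hb hc hd βp' βp hβp' hβp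
      F₂ θ hθ φ hφa hφb hφc hφd
end
end

section
/- Let K be a field of characteristic 0, E = K(a,b,c,d), p ≠ p' odd primes. Define Γ_p^*(a^2) = 2a^{2p}·(ad−bc)^p/(a^p d^p − b^p c^p) extended as twice a field homomorphism on degree-2 monomials, and Γ_{\bar p'}^* the map induced by a ↦ a^{p'}, b ↦ b^{p'}, c ↦ c^{p'}, d ↦ d^{p'}. Then Γ_{\bar p'}^*(Γ_p^*(a^2)) ≠ Γ_p^*(Γ_{\bar p'}^*(a^2)); explicitly, 2a^{2pp'}·(a^{p'}d^{p'}−b^{p'}c^{p'})^p/(a^{pp'}d^{pp'}−b^{pp'}c^{pp'}) ≠ 2a^{2pp'}·((ad−bc)^p/(a^p d^p − b^p c^p))^{p'}. -/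
open MvPolynomial

noncomputable section

/-!
Clear the denominators, which are nonzero, and pull the resulting identity back to
`K[a, b, c, d]`. At the point `(a, b, c, d) = (1, -1, 1, 1)` every `a^n d^n - b^n c^n` with `n`
odd equals `2`, so the identity would give `2^(p + p') = 2^(pp' + 1)` in `K`, which is false in
characteristic zero because `p + p' < pp' + 1` for `p, p' ≥ 2`.
-/

/-- The determinant of the entrywise `n`-th power of the generic matrix `[[a, b], [c, d]]`. -/
def powDet (K : Type) [Field K] (n : ℕ) : MvPolynomial (Fin 4) K :=
  X 0 ^ n * X 3 ^ n - X 1 ^ n * X 2 ^ n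

lemma eval_powDet_of_odd (K : Type) [Field K] {n : ℕ} (hn : Odd n) :
    eval ![1, -1, 1, 1] (powDet K n) = 2 := by
  simp [powDet, hn.neg_one_pow, one_add_one_eq_two]

lemma powDet_ne_zero_of_odd (K : Type) [Field K] [CharZero K] {n : ℕ} (hn : Odd n) :
    powDet K n ≠ 0 := fun h0 => two_ne_zero (by simpa [h0] using (eval_powDet_of_odd K hn).symm)

lemma algebraMap_powDet (K : Type) [Field K] (n : ℕ) :
    algebraMap _ (E K) (powDet K n) = va K ^ n * vd K ^ n - vb K ^ n * vc K ^ n := by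
  simp [powDet, va, vb, vc, vd]

lemma va_pow_mul_vd_pow_sub_ne_zero_of_odd (K : Type) [Field K] [CharZero K] {n : ℕ} (hn : Odd n) :
    va K ^ n * vd K ^ n - vb K ^ n * vc K ^ n ≠ 0 := by
  rw [← algebraMap_powDet]
  exact (map_ne_zero_iff _ (IsFractionRing.injective _ _)).mpr (powDet_ne_zero_of_odd K hn)

lemma two_pow_add_ne_two_pow_mul_add_one (K : Type) [Field K] [CharZero K] {m n : ℕ}
    (hm : 2 ≤ m) (hn : 2 ≤ n) : (2 : K) ^ (m + n) ≠ 2 ^ (m * n + 1) := by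
  have hlt : m + n < m * n + 1 := by nlinarith
  exact_mod_cast (Nat.pow_lt_pow_right one_lt_two hlt).ne

theorem stmt14_general (K : Type) [Field K] [CharZero K] (p p' : ℕ)
    (hp : p.Prime) (hop : Odd p) (hp' : p'.Prime) (hop' : Odd p')
    (a b c d : E K) (ha : a = va K) (hb : b = vb K) (hc : c = vc K) (hd : d = vd K) :
    2 * a ^ (2 * p * p') * (a ^ p' * d ^ p' - b ^ p' * c ^ p') ^ p
        / (a ^ (p * p') * d ^ (p * p') - b ^ (p * p') * c ^ (p * p'))
      ≠ 2 * a ^ (2 * p * p')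
        * ((a * d - b * c) ^ p / (a ^ p * d ^ p - b ^ p * c ^ p)) ^ p' := by
  subst ha hb hc hd
  have hodd : Odd (p * p') := hop.mul hop'
  intro h
  have hcleared : 2 * X 0 ^ (2 * p * p') * powDet K p' ^ p * powDet K p ^ p'
      = 2 * X 0 ^ (2 * p * p') * powDet K 1 ^ (p * p') * powDet K (p * p') := by
    apply IsFractionRing.injective (MvPolynomial (Fin 4) K) (E K)
    have h1 := algebraMap_powDet K 1
    simp only [pow_one] at h1
    have ha : algebraMap (MvPolynomial (Fin 4) K) (E K) (X 0) = va K := rfl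
    simp only [map_mul, map_pow, map_ofNat, algebraMap_powDet, h1, ha]
    rw [div_pow, ← pow_mul, mul_div_assoc', div_eq_div_iff
      (va_pow_mul_vd_pow_sub_ne_zero_of_odd K hodd)
      (pow_ne_zero _ (va_pow_mul_vd_pow_sub_ne_zero_of_odd K hop))] at h
    linear_combination h
  have hval := congrArg (eval ![1, -1, 1, 1]) hcleared
  simp only [map_mul, map_pow, map_ofNat, eval_X, Matrix.cons_val_zero, one_pow, mul_one,
    eval_powDet_of_odd K hop, eval_powDet_of_odd K hop', eval_powDet_of_odd K hodd,
    eval_powDet_of_odd K odd_one] at hval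
  refine two_pow_add_ne_two_pow_mul_add_one K hp.two_le hp'.two_le ?_
  rw [pow_add, pow_succ]
  linear_combination hval / 2

/-- Non-commutation of `Γ_p^*` with the Frobenius-power substitution `Γ_{p̄'}^*` on `a²`:
for distinct odd primes `p ≠ p'`, in `E = K(a,b,c,d)`,
`2a^{2pp'}·(a^{p'}d^{p'}−b^{p'}c^{p'})^p/(a^{pp'}d^{pp'}−b^{pp'}c^{pp'})
  ≠ 2a^{2pp'}·((ad−bc)^p/(a^p d^p − b^p c^p))^{p'}`,
i.e. `Γ_{p̄'}^*(Γ_p^*(a²)) ≠ Γ_p^*(Γ_{p̄'}^*(a²))`. -/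
theorem stmt14 (K : Type) [Field K] [CharZero K] (p p' : ℕ)
    (hp : p.Prime) (hop : Odd p) (hp' : p'.Prime) (hop' : Odd p') (hne : p ≠ p')
    (a b c d : E K) (ha : a = va K) (hb : b = vb K) (hc : c = vc K) (hd : d = vd K) :
    2 * a ^ (2 * p * p') * (a ^ p' * d ^ p' - b ^ p' * c ^ p') ^ p
        / (a ^ (p * p') * d ^ (p * p') - b ^ (p * p') * c ^ (p * p'))
      ≠ 2 * a ^ (2 * p * p')
        * ((a * d - b * c) ^ p / (a ^ p * d ^ p - b ^ p * c ^ p)) ^ p' :=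
  stmt14_general K p p' hp hop hp' hop' a b c d ha hb hc hd
end
end

section
/- Let K be a field of characteristic 0, E = K(a,b,c,d), p an odd prime, and F = E[τ] a degree-4 field extension with minimal polynomial τ^4 − 4uτ^2 + 4vw over E (u,v,w as in the split symmetric case). Define φ_p : E → F by φ_p(a) = a^p·(τ/2) + b^p·(w/τ), φ_p(b) = a^p·(v/τ) + b^p·(τ/2), φ_p(c) = c^p·(τ/2) + d^p·(w/τ), φ_p(d) = c^p·(v/τ) + d^p·(τ/2). Then φ_p(a)·φ_p(b) = 2^{p-1}·a^p·b^p. -/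
open MvPolynomial

noncomputable section

private lemma key17 (L : Type) [Field L] [CharZero L] (p : ℕ) (a b c d : L)
    (hΔ : a^p*d^p - b^p*c^p ≠ 0) :
    2*(((a ^ p * d ^ p + b ^ p * c ^ p) * (a * d + b * c) ^ p
          - 2 ^ (p + 1) * a ^ p * b ^ p * c ^ p * d ^ p)
        / (a ^ p * d ^ p - b ^ p * c ^ p) ^ 2)*(a^p*b^p)
    + (a^p)^2*(b ^ p * d ^ p * (2 ^ p * (a ^ p * d ^ p + b ^ p * c ^ p)
          - 2 * (a * d + b * c) ^ p) / (a ^ p * d ^ p - b ^ p * c ^ p) ^ 2)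
    + (b^p)^2*(a ^ p * c ^ p * (2 ^ p * (a ^ p * d ^ p + b ^ p * c ^ p)
          - 2 * (a * d + b * c) ^ p) / (a ^ p * d ^ p - b ^ p * c ^ p) ^ 2)
    = 2^p*(a^p*b^p) := by
  field_simp
  ring

private lemma aux17 (F : Type) [Field F] [CharZero F] (p : ℕ) (hp : 0 < p)
    (ap bp V W U τ : F) (hτ : τ ≠ 0)
    (hint : τ^4 - 4*U * τ^2 + 4*(V*W) = 0)
    (hkey : 2*U*(ap*bp) + ap^2*V + bp^2*W = 2^p*(ap*bp)) :
    (ap * (τ/2) + bp * (W/τ)) * (ap * (V/τ) + bp * (τ/2)) = 2^(p-1)*ap*bp := by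
  have hp2 : (2:F)^(p-1)*2 = 2^p := by rw [← pow_succ]; congr 1; omega
  field_simp
  linear_combination (ap*bp) * hint + 2*τ^2 * hkey - 4*ap*bp*τ^2*hp2 + 2*ap*bp*τ^2*hp2

set_option maxHeartbeats 2000000

/-- Let `F = E[τ]` be a degree-4 field extension of `E = K(a,b,c,d)` where the minimal
polynomial of `τ` is `t⁴ − 4u t² + 4vw` (`u, v, w` as in the split symmetric case), and let
`φ_p(a) = a^p·(τ/2) + b^p·(w/τ)`, `φ_p(b) = a^p·(v/τ) + b^p·(τ/2)`. Then
`φ_p(a)·φ_p(b) = 2^{p−1}·a^p·b^p`. -/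
theorem stmt17 (K : Type) [Field K] [CharZero K] (p : ℕ) (hp : p.Prime) (hodd : Odd p)
    (a b c d : E K) (ha : a = va K) (hb : b = vb K) (hc : c = vc K) (hd : d = vd K)
    (u v w : E K)
    (hu : u = ((a ^ p * d ^ p + b ^ p * c ^ p) * (a * d + b * c) ^ p
          - 2 ^ (p + 1) * a ^ p * b ^ p * c ^ p * d ^ p)
        / (a ^ p * d ^ p - b ^ p * c ^ p) ^ 2)
    (hv : v = b ^ p * d ^ p * (2 ^ p * (a ^ p * d ^ p + b ^ p * c ^ p)
          - 2 * (a * d + b * c) ^ p) / (a ^ p * d ^ p - b ^ p * c ^ p) ^ 2)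
    (hw : w = a ^ p * c ^ p * (2 ^ p * (a ^ p * d ^ p + b ^ p * c ^ p)
          - 2 * (a * d + b * c) ^ p) / (a ^ p * d ^ p - b ^ p * c ^ p) ^ 2)
    (F : Type) [Field F] [Algebra (E K) F] (τ : F)
    (hdeg : Module.finrank (E K) F = 4)
    (hmin : minpoly (E K) τ = Polynomial.X ^ 4 - Polynomial.C (4 * u) * Polynomial.X ^ 2
        + Polynomial.C (4 * v * w)) :
    (algebraMap (E K) F (a ^ p) * (τ / 2)
        + algebraMap (E K) F (b ^ p) * (algebraMap (E K) F w / τ))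
      * (algebraMap (E K) F (a ^ p) * (algebraMap (E K) F v / τ)
        + algebraMap (E K) F (b ^ p) * (τ / 2))
      = algebraMap (E K) F (2 ^ (p - 1) * a ^ p * b ^ p) := by
  haveI hE0 : CharZero (E K) :=
    charZero_of_injective_algebraMap (IsFractionRing.injective (MvPolynomial (Fin 4) K) (E K))
  haveI hF0 : CharZero F := charZero_of_injective_algebraMap (algebraMap (E K) F).injective
  have hq : (X 0 : MvPolynomial (Fin 4) K)^p * X 3 ^p - X 1 ^p * X 2 ^p ≠ 0 := by
    intro h
    have := congrArg (eval (fun i => if i = 1 then (0:K) else 1)) h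
    simp [hp.ne_zero] at this
  have hΔ : a^p*d^p - b^p*c^p ≠ 0 := by
    rw [ha, hb, hc, hd]
    unfold va vb vc vd
    rw [← map_pow, ← map_pow, ← map_pow, ← map_pow, ← map_mul, ← map_mul, ← map_sub]
    exact (map_ne_zero_iff _ (IsFractionRing.injective (MvPolynomial (Fin 4) K) (E K))).mpr hq
  have key2 : 2*u*(a^p*b^p) + (a^p)^2*v + (b^p)^2*w = 2^p*(a^p*b^p) := by
    rw [hu, hv, hw]
    exact key17 (E K) p a b c d hΔ
  have hτ : τ ≠ 0 := by
    intro h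
    rw [h, minpoly.zero] at hmin
    have := congrArg (Polynomial.coeff · 4) hmin
    simp [Polynomial.coeff_X, mul_assoc, Polynomial.coeff_C_mul, Polynomial.coeff_X_pow] at this
  have hint : τ^4 - 4*(algebraMap (E K) F u) * τ^2
      + 4*((algebraMap (E K) F v)*(algebraMap (E K) F w)) = 0 := by
    have h := minpoly.aeval (E K) τ
    rw [hmin] at h
    simp only [map_add, map_sub, map_mul, map_pow, Polynomial.aeval_X, Polynomial.aeval_C,
      map_ofNat] at h
    linear_combination h
  have hkeyF := congrArg (algebraMap (E K) F) key2
  simp only [map_add, map_mul, map_pow, map_ofNat] at hkeyF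
  simp only [map_mul, map_pow, map_ofNat]
  exact aux17 F p hp.pos _ _ _ _ _ τ hτ hint hkeyF
end
end
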